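/- Let P, Q be integers with Q ≥ 0 and P^2 − 4Q > 0 (equivalently, Q ≥ 0 and either P > 2√Q or P < −2√Q). Then the Lucas sequence U = U(P,Q), extended to ℤ by zero on negative indices, is infinitely log-concave: for every i ≥ 1 and every n ∈ ℤ, (𝓛^i U) n ≥ 0. -/

import Mathlib

/-- The Lucas sequence of the first kind `U(P,Q)`. -/
def lucasU (P Q : ℤ) : ℕ → ℤ
  | 0 => 0
  | 1 => 1
  | n + 2 => P * lucasU P Q (n + 1) - Q * lucasU P Q n

/-- The Lucas sequence extended to `ℤ` by zero on negative indices, as a real sequence. -/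
def lucasUZ (P Q : ℤ) : ℤ → ℝ := fun n => if n < 0 then 0 else (lucasU P Q n.toNat : ℝ)

/-- The log-operator on sequences indexed by `ℤ`. -/
def logOp (a : ℤ → ℝ) : ℤ → ℝ := fun n => (a n) ^ 2 - a (n - 1) * a (n + 1)

/-!
By the Cassini-type identity `U (n+1)^2 - U n * U (n+2) = Q^n`, the sequence `𝓛 U` is the
geometric sequence `Q^(n-1)` started at `n = 1`. The log-operator sends a geometric sequence
started at `m` to the unit impulse at `m`, and fixes that impulse, so `𝓛^i U` is the impulse at `1`
for every `i ≥ 2`. Hence all iterates are nonnegative as soon as `Q ≥ 0`.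
-/

theorem lucasU_sq_sub_mul (P Q : ℤ) (n : ℕ) :
    lucasU P Q (n + 1) ^ 2 - lucasU P Q n * lucasU P Q (n + 2) = Q ^ n := by
  induction n with
  | zero => simp [lucasU]
  | succ k ih =>
    simp only [lucasU] at ih ⊢
    linear_combination Q * ih

theorem lucasUZ_natCast (P Q : ℤ) (n : ℕ) : lucasUZ P Q n = lucasU P Q n := by
  simp [lucasUZ]

theorem lucasUZ_of_neg (P Q : ℤ) {n : ℤ} (hn : n < 0) : lucasUZ P Q n = 0 := by
  simp [lucasUZ, hn]

def geomFrom (q : ℝ) (m : ℤ) : ℤ → ℝ := fun n => if n < m then 0 else q ^ (n - m).toNat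

theorem geomFrom_nonneg {q : ℝ} (hq : 0 ≤ q) (m n : ℤ) : 0 ≤ geomFrom q m n := by
  unfold geomFrom
  split_ifs
  exacts [le_rfl, pow_nonneg hq _]

theorem logOp_lucasUZ (P Q : ℤ) : logOp (lucasUZ P Q) = geomFrom Q 1 := by
  funext n
  rcases lt_trichotomy n 0 with hn | rfl | hn
  · simp [logOp, geomFrom, lucasUZ_of_neg, hn, show n < 1 by omega]
  · simp [logOp, geomFrom, lucasUZ, lucasU]
  · obtain ⟨k, rfl⟩ : ∃ k : ℕ, n = k + 1 := ⟨(n - 1).toNat, by omega⟩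
    have hgeom : geomFrom Q 1 (k + 1) = (Q : ℝ) ^ k := by simp [geomFrom]
    have hsucc : (k : ℤ) + 1 = ((k + 1 : ℕ) : ℤ) := by push_cast; ring
    have hsucc_succ : (k : ℤ) + 1 + 1 = ((k + 2 : ℕ) : ℤ) := by push_cast; ring
    rw [logOp, hgeom, add_sub_cancel_right, hsucc_succ, hsucc, lucasUZ_natCast, lucasUZ_natCast,
      lucasUZ_natCast]
    exact_mod_cast lucasU_sq_sub_mul P Q k

theorem logOp_geomFrom (q : ℝ) (m : ℤ) : logOp (geomFrom q m) = Pi.single m 1 := by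
  funext n
  simp only [logOp, geomFrom, Pi.single_apply]
  rcases lt_trichotomy n m with h | rfl | h
  · simp [h, h.ne, show n - 1 < m by omega]
  · simp
  · have hexp : (n - m).toNat + (n - m).toNat = (n - 1 - m).toNat + (n + 1 - m).toNat := by omega
    simp only [show ¬ n < m by omega, show ¬ n - 1 < m by omega, show ¬ n + 1 < m by omega,
      h.ne', if_false, sq, ← pow_add, hexp, sub_self]

theorem logOp_single (m : ℤ) (c : ℝ) : logOp (Pi.single m c) = Pi.single m (c ^ 2) := by
  funext n
  simp only [logOp, Pi.single_apply]
  rcases eq_or_ne n m with rfl | h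
  · simp
  · simp [h]
    omega

theorem logOp_iterate_lucasUZ (P Q : ℤ) (i : ℕ) :
    logOp^[i + 2] (lucasUZ P Q) = Pi.single 1 1 := by
  rw [Function.iterate_add_apply, Function.iterate_succ_apply, Function.iterate_one,
    logOp_lucasUZ, logOp_geomFrom]
  exact Function.iterate_fixed (by rw [logOp_single, one_pow]) i

theorem lucasU_pos_discriminant_inf_log_concave_general (P Q : ℤ) (hQ : 0 ≤ Q) :
    ∀ i : ℕ, 1 ≤ i → ∀ n : ℤ, 0 ≤ (logOp^[i] (lucasUZ P Q)) n := by
  rintro (_ | _ | i) hi n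
  · omega
  · rw [Function.iterate_one, logOp_lucasUZ]
    exact geomFrom_nonneg (Int.cast_nonneg hQ) 1 n
  · rw [logOp_iterate_lucasUZ, Pi.single_apply]
    positivity

theorem lucasU_pos_discriminant_inf_log_concave (P Q : ℤ) (hQ : 0 ≤ Q)
    (hD : (0 : ℤ) < P ^ 2 - 4 * Q) :
    ∀ i : ℕ, 1 ≤ i → ∀ n : ℤ, 0 ≤ (logOp^[i] (lucasUZ P Q)) n :=
  lucasU_pos_discriminant_inf_log_concave_general P Q hQ
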